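/- Let F : ℂ⁴ → ℂ be holomorphic on the forward tube T. For each real 4×4 matrix R with Rᵀ R = 1 and det R = 1 (i.e., R ∈ SO(4)), define ρ_R : ℂ⁴ → ℂ⁴ by: given z = (z₀,z₁,z₂,z₃), set x := (z₁, z₂, z₃, i z₀) ∈ ℂ⁴, w := R x (R acting ℂ-linearly), and ρ_R(z) := (−i w₄, w₁, w₂, w₃). Assume that for every R ∈ SO(4) and every z ∈ T with ρ_R(z) ∈ T one has F(ρ_R(z)) = F(z). Then for every complex 4×4 matrix Λ with Λᵀ G Λ = G and det Λ = 1, and every z ∈ T with Λz ∈ T (Λ acting ℂ-linearly), one has F(Λz) = F(z). -/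

import Mathlib

open Complex Matrix

/-- The forward tube `T = {z ∈ ℂ⁴ : −Im z₀ > √((Im z₁)² + (Im z₂)² + (Im z₃)²)}`. -/
def ForwardTube : Set (Fin 4 → ℂ) :=
  {z | Real.sqrt ((z 1).im ^ 2 + (z 2).im ^ 2 + (z 3).im ^ 2) < -(z 0).im}

/-- The Minkowski metric `G = diag(1,−1,−1,−1)` over `ℂ`. -/
def minkGC : Matrix (Fin 4) (Fin 4) ℂ := Matrix.diagonal ![1, -1, -1, -1]

/-- Action of a Euclidean rotation `R ∈ SO(4)` on a point `z` of the tube, via the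
Euclidean coordinates `x = (z₁, z₂, z₃, i z₀)`: `ρ_R(z) = (−i(Rx)₄, (Rx)₁, (Rx)₂, (Rx)₃)`. -/
noncomputable def euclRotAct (R : Matrix (Fin 4) (Fin 4) ℝ) (z : Fin 4 → ℂ) : Fin 4 → ℂ :=
  let x : Fin 4 → ℂ := ![z 1, z 2, z 3, Complex.I * z 0]
  let w : Fin 4 → ℂ := fun i => ∑ j, (R i j : ℂ) * x j
  ![-Complex.I * w 3, w 0, w 1, w 2]

/-!
Since `z · z = z₀² - z₁² - z₂² - z₃²` is invariant under `L₊(ℂ)`, it suffices to show that `F z`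
depends only on `z · z` on the tube.

Spatial rotations lie in `SO(4)` and preserve the tube; two of them turn `Im (z₁, z₂, z₃)` into the
`z₃`-direction. A point with real `z₁, z₂` is then determined by `c = (z₀ + z₃)(z₀ - z₃)` and
`u = z₀ + z₃`, and lies in the tube iff `u` lies in the convex set `{Im u < 0, Im (c / u) < 0}`.
The Euclidean rotation in the `(x₃, x₄)`-plane is an imaginary boost, `u ↦ u e^{-iθ}`, so the
holomorphic function `u ↦ F(z(u))` has zero derivative in the direction `iu`, hence zero complex
derivative, and is constant on that convex set. Moving `u` by a positive real factor (a real
boost) makes `z₃` real too; two more spatial rotations then make `z₁ = z₂ = 0`, and all points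
`(z₀, 0, 0, z₃)` of the tube with the same `z · z` lie in one such family.
-/

open Filter Topology ComplexConjugate

theorem mem_forwardTube_iff_of_im_eq_zero {z : Fin 4 → ℂ} (h₁ : (z 1).im = 0) (h₂ : (z 2).im = 0) :
    z ∈ ForwardTube ↔ (z 0 + z 3).im < 0 ∧ (z 0 - z 3).im < 0 := by
  simp only [ForwardTube, Set.mem_ofPred_eq, h₁, h₂, add_im, sub_im]
  rw [show (0 : ℝ) ^ 2 + 0 ^ 2 + (z 3).im ^ 2 = (z 3).im ^ 2 by ring, Real.sqrt_sq_eq_abs,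
    abs_lt]
  constructor <;> rintro ⟨h, h'⟩ <;> constructor <;> linarith

noncomputable def minkowskiSq (z : Fin 4 → ℂ) : ℂ := z ⬝ᵥ minkGC *ᵥ z

theorem minkowskiSq_apply (z : Fin 4 → ℂ) :
    minkowskiSq z = z 0 ^ 2 - z 1 ^ 2 - z 2 ^ 2 - z 3 ^ 2 := by
  simp only [minkowskiSq, dotProduct, minkGC, mulVec_diagonal, Fin.sum_univ_four, Fin.isValue,
    cons_val_zero, one_mul, cons_val_one, neg_mul, mul_neg, cons_val]
  ring

theorem minkowskiSq_mulVec {Λ : Matrix (Fin 4) (Fin 4) ℂ} (hΛ : Λᵀ * minkGC * Λ = minkGC)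
    (z : Fin 4 → ℂ) : minkowskiSq (Λ *ᵥ z) = minkowskiSq z := by
  rw [minkowskiSq, mulVec_mulVec, ← vecMul_transpose, ← dotProduct_mulVec, mulVec_mulVec,
    ← Matrix.mul_assoc, hΛ, minkowskiSq]

-- Planes of the Euclidean coordinates `x = (z₁, z₂, z₃, i z₀)`, indexed from `0`.
noncomputable def planeRotation01 (θ : ℝ) : Matrix (Fin 4) (Fin 4) ℝ :=
  !![Real.cos θ, -Real.sin θ, 0, 0; Real.sin θ, Real.cos θ, 0, 0; 0, 0, 1, 0; 0, 0, 0, 1]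

noncomputable def planeRotation12 (θ : ℝ) : Matrix (Fin 4) (Fin 4) ℝ :=
  !![1, 0, 0, 0; 0, Real.cos θ, -Real.sin θ, 0; 0, Real.sin θ, Real.cos θ, 0; 0, 0, 0, 1]

noncomputable def planeRotation23 (θ : ℝ) : Matrix (Fin 4) (Fin 4) ℝ :=
  !![1, 0, 0, 0; 0, 1, 0, 0; 0, 0, Real.cos θ, -Real.sin θ; 0, 0, Real.sin θ, Real.cos θ]

theorem planeRotation01_mem_specialOrthogonalGroup (θ : ℝ) :
    planeRotation01 θ ∈ specialOrthogonalGroup (Fin 4) ℝ := by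
  rw [mem_specialOrthogonalGroup_iff, mem_orthogonalGroup_iff']
  constructor
  · ext i j
    fin_cases i <;> fin_cases j <;>
      simp [planeRotation01, mul_apply, Fin.sum_univ_four, ← sq, mul_comm (Real.sin θ)]
  · simp [planeRotation01, det_succ_row_zero, Fin.sum_univ_succ, Fin.succAbove, ← sq]

theorem planeRotation12_mem_specialOrthogonalGroup (θ : ℝ) :
    planeRotation12 θ ∈ specialOrthogonalGroup (Fin 4) ℝ := by
  rw [mem_specialOrthogonalGroup_iff, mem_orthogonalGroup_iff']
  constructor
  · ext i j
    fin_cases i <;> fin_cases j <;>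
      simp [planeRotation12, mul_apply, Fin.sum_univ_four, ← sq, mul_comm (Real.sin θ)]
  · simp [planeRotation12, det_succ_row_zero, Fin.sum_univ_succ, Fin.succAbove, ← sq]

theorem planeRotation23_mem_specialOrthogonalGroup (θ : ℝ) :
    planeRotation23 θ ∈ specialOrthogonalGroup (Fin 4) ℝ := by
  rw [mem_specialOrthogonalGroup_iff, mem_orthogonalGroup_iff']
  constructor
  · ext i j
    fin_cases i <;> fin_cases j <;>
      simp [planeRotation23, mul_apply, Fin.sum_univ_four, ← sq, mul_comm (Real.sin θ)]
  · simp [planeRotation23, det_succ_row_zero, Fin.sum_univ_succ, Fin.succAbove, ← sq]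

noncomputable def spatialRot12 (θ : ℝ) (z : Fin 4 → ℂ) : Fin 4 → ℂ :=
  ![z 0, Real.cos θ * z 1 - Real.sin θ * z 2, Real.sin θ * z 1 + Real.cos θ * z 2, z 3]

noncomputable def spatialRot23 (θ : ℝ) (z : Fin 4 → ℂ) : Fin 4 → ℂ :=
  ![z 0, z 1, Real.cos θ * z 2 - Real.sin θ * z 3, Real.sin θ * z 2 + Real.cos θ * z 3]

theorem euclRotAct_planeRotation01 (θ : ℝ) : euclRotAct (planeRotation01 θ) = spatialRot12 θ := by
  ext z i
  fin_cases i <;> simp [euclRotAct, planeRotation01, spatialRot12, Fin.sum_univ_four,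
    ← mul_assoc, sub_eq_add_neg]

theorem euclRotAct_planeRotation12 (θ : ℝ) : euclRotAct (planeRotation12 θ) = spatialRot23 θ := by
  ext z i
  fin_cases i <;> simp [euclRotAct, planeRotation12, spatialRot23, Fin.sum_univ_four,
    ← mul_assoc, sub_eq_add_neg]

theorem rotation_sq_add_sq (θ a b : ℝ) :
    (Real.cos θ * a - Real.sin θ * b) ^ 2 + (Real.sin θ * a + Real.cos θ * b) ^ 2 =
      a ^ 2 + b ^ 2 := by
  linear_combination (a ^ 2 + b ^ 2) * Real.cos_sq_add_sin_sq θ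

theorem spatialRot12_mem_forwardTube (θ : ℝ) {z : Fin 4 → ℂ} (hz : z ∈ ForwardTube) :
    spatialRot12 θ z ∈ ForwardTube := by
  simpa [ForwardTube, spatialRot12, cos_ofReal_re, sin_ofReal_re,
    rotation_sq_add_sq θ (z 1).im (z 2).im] using hz

theorem spatialRot23_mem_forwardTube (θ : ℝ) {z : Fin 4 → ℂ} (hz : z ∈ ForwardTube) :
    spatialRot23 θ z ∈ ForwardTube := by
  simpa [ForwardTube, spatialRot23, cos_ofReal_re, sin_ofReal_re, add_assoc,
    rotation_sq_add_sq θ (z 2).im (z 3).im] using hz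

theorem minkowskiSq_spatialRot12 (θ : ℝ) (z : Fin 4 → ℂ) :
    minkowskiSq (spatialRot12 θ z) = minkowskiSq z := by
  simp only [spatialRot12, Fin.isValue, ofReal_cos, ofReal_sin, minkowskiSq_apply, cons_val_zero,
    cons_val_one, cons_val, sub_left_inj]
  linear_combination (-z 1 ^ 2 - z 2 ^ 2) * cos_sq_add_sin_sq (θ : ℂ)

theorem minkowskiSq_spatialRot23 (θ : ℝ) (z : Fin 4 → ℂ) :
    minkowskiSq (spatialRot23 θ z) = minkowskiSq z := by
  simp only [spatialRot23, Fin.isValue, ofReal_cos, ofReal_sin, minkowskiSq_apply, cons_val_zero,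
    cons_val_one, cons_val]
  linear_combination (-z 2 ^ 2 - z 3 ^ 2) * cos_sq_add_sin_sq (θ : ℂ)

theorem exists_cos_mul_sub_sin_mul_eq_zero (a b : ℝ) :
    ∃ θ : ℝ, Real.cos θ * a - Real.sin θ * b = 0 := by
  set x : ℂ := ⟨b, a⟩
  by_cases hx : x = 0
  · obtain ⟨rfl, rfl⟩ : b = 0 ∧ a = 0 := by simpa [x, Complex.ext_iff] using hx
    exact ⟨0, by simp⟩
  · refine ⟨arg x, ?_⟩
    rw [cos_arg hx, sin_arg]
    ring

def lightConeDomain (c : ℂ) : Set ℂ := {u | u.im < 0 ∧ (c / u).im < 0}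

theorem ne_zero_of_mem_lightConeDomain {c u : ℂ} (hu : u ∈ lightConeDomain c) : u ≠ 0 :=
  ne_of_apply_ne im hu.1.ne

theorem lightConeDomain_eq_inter (c : ℂ) :
    lightConeDomain c = {u | u.im < 0} ∩ {u | 0 < (conj c * u).im} := by
  ext u
  simp only [lightConeDomain, Set.mem_inter_iff, Set.mem_ofPred_eq, and_congr_right_iff]
  intro hu
  have hN : 0 < normSq u := normSq_pos.2 (ne_of_apply_ne im hu.ne)
  rw [div_im, ← sub_div, div_neg_iff]
  simp [hN, hN.not_gt]

theorem isOpen_lightConeDomain (c : ℂ) : IsOpen (lightConeDomain c) := by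
  rw [lightConeDomain_eq_inter]
  exact (isOpen_lt (by fun_prop) continuous_const).inter (isOpen_lt continuous_const (by fun_prop))

theorem convex_lightConeDomain (c : ℂ) : Convex ℝ (lightConeDomain c) := by
  rw [lightConeDomain_eq_inter]
  exact (convex_halfSpace_im_lt 0).inter
    ((convex_halfSpace_im_gt 0).linear_preimage (LinearMap.mulLeft ℝ (conj c)))

theorem exists_mem_lightConeDomain_im_eq {c u : ℂ} (hu : u ∈ lightConeDomain c) :
    ∃ u' ∈ lightConeDomain c, u'.im = (c / u').im := by
  obtain ⟨hu, hv⟩ := hu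
  set t := Real.sqrt ((c / u).im / u.im)
  have ht : 0 < t := Real.sqrt_pos.2 (div_pos_of_neg_of_neg hv hu)
  have ht2 : t ^ 2 = (c / u).im / u.im := Real.sq_sqrt (div_pos_of_neg_of_neg hv hu).le
  have hdiv : c / (t * u) = c / u / t := by rw [mul_comm, div_div]
  refine ⟨t * u, ⟨?_, ?_⟩, ?_⟩
  · simpa using mul_neg_of_pos_of_neg ht hu
  · simpa [hdiv] using div_neg_of_neg_of_pos hv ht
  · simp only [hdiv, im_ofReal_mul, div_ofReal_im]
    field_simp
    rw [ht2, div_mul_cancel₀ _ hu.ne]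

/-- The point with light-cone coordinates `z₀ + z₃ = u`, `z₀ - z₃ = c / u` and with
`(z₁, z₂) = (x₁, x₂)`. -/
noncomputable def lightConePoint (c x₁ x₂ u : ℂ) : Fin 4 → ℂ :=
  ![(u + c / u) / 2, x₁, x₂, (u - c / u) / 2]

theorem lightConePoint_mem_forwardTube {c x₁ x₂ u : ℂ} (hx₁ : x₁.im = 0) (hx₂ : x₂.im = 0)
    (hu : u ∈ lightConeDomain c) : lightConePoint c x₁ x₂ u ∈ ForwardTube := by
  have hsum : lightConePoint c x₁ x₂ u 0 + lightConePoint c x₁ x₂ u 3 = u := by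
    simp only [lightConePoint, Fin.isValue, cons_val_zero, cons_val]
    ring
  have hdiff : lightConePoint c x₁ x₂ u 0 - lightConePoint c x₁ x₂ u 3 = c / u := by
    simp only [lightConePoint, Fin.isValue, cons_val_zero, cons_val]
    ring
  rw [mem_forwardTube_iff_of_im_eq_zero hx₁ hx₂, hsum, hdiff]
  exact hu

theorem minkowskiSq_lightConePoint {c x₁ x₂ u : ℂ} (hu : u ≠ 0) :
    minkowskiSq (lightConePoint c x₁ x₂ u) = c - x₁ ^ 2 - x₂ ^ 2 := by
  simp only [lightConePoint, minkowskiSq_apply, Fin.isValue, cons_val_zero, cons_val_one,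
    cons_val]
  linear_combination div_mul_cancel₀ c hu

theorem eq_lightConePoint (z : Fin 4 → ℂ) (hz : z 0 + z 3 ≠ 0) :
    z = lightConePoint ((z 0 + z 3) * (z 0 - z 3)) (z 1) (z 2) (z 0 + z 3) := by
  ext i
  fin_cases i <;> simp [lightConePoint, hz]

theorem mem_lightConeDomain_of_mem_forwardTube {z : Fin 4 → ℂ} (hz : z ∈ ForwardTube)
    (h₁ : (z 1).im = 0) (h₂ : (z 2).im = 0) :
    z 0 + z 3 ∈ lightConeDomain ((z 0 + z 3) * (z 0 - z 3)) := by
  obtain ⟨hu, hv⟩ := (mem_forwardTube_iff_of_im_eq_zero h₁ h₂).1 hz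
  exact ⟨hu, by rwa [mul_div_cancel_left₀ _ (ne_of_apply_ne im hu.ne)]⟩

theorem mem_lightConeDomain_minkowskiSq_and_eq {y : Fin 4 → ℂ} (hy : y ∈ ForwardTube)
    (h₁ : y 1 = 0) (h₂ : y 2 = 0) : y 0 + y 3 ∈ lightConeDomain (minkowskiSq y) ∧
      y = lightConePoint (minkowskiSq y) 0 0 (y 0 + y 3) := by
  have hq : minkowskiSq y = (y 0 + y 3) * (y 0 - y 3) := by
    rw [minkowskiSq_apply, h₁, h₂]
    ring
  have hD := mem_lightConeDomain_of_mem_forwardTube hy (by simp [h₁]) (by simp [h₂])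
  rw [hq]
  refine ⟨hD, ?_⟩
  conv_lhs => rw [eq_lightConePoint y (ne_zero_of_mem_lightConeDomain hD), h₁, h₂]

theorem euclRotAct_planeRotation23_lightConePoint (θ : ℝ) (c x₁ x₂ u : ℂ) :
    euclRotAct (planeRotation23 θ) (lightConePoint c x₁ x₂ u) =
      lightConePoint c x₁ x₂ (u * exp (-(θ * I))) := by
  have hdiv : c / (u * exp (-(θ * I))) = c / u * (Real.cos θ + Real.sin θ * I) := by
    rw [div_mul_eq_div_div, exp_neg, div_inv_eq_mul, exp_mul_I, ofReal_cos, ofReal_sin]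
  have hexp : exp (-(θ * I)) = Real.cos θ - Real.sin θ * I := by
    rw [← neg_mul, exp_mul_I]
    simp [sub_eq_add_neg]
  simp only [lightConePoint, hdiv]
  rw [hexp]
  generalize c / u = v
  ext i
  fin_cases i <;> simp [euclRotAct, planeRotation23, Fin.sum_univ_four]
  · linear_combination (-Complex.cos θ * (u + v) / 2) * I_sq
  · ring

theorem HasDerivAt.eq_zero_of_eventually_comp_eq {𝕜 𝕜' E : Type*} [NontriviallyNormedField 𝕜]
    [NontriviallyNormedField 𝕜'] [NormedAlgebra 𝕜 𝕜'] [NormedAddCommGroup E] [NormedSpace 𝕜 E]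
    [NormedSpace 𝕜' E] [IsScalarTower 𝕜 𝕜' E] {g : 𝕜' → E} {g' : E} {γ : 𝕜 → 𝕜'} {γ' : 𝕜'}
    {t : 𝕜} (hg : HasDerivAt g g' (γ t)) (hγ : HasDerivAt γ γ' t) (hγ' : γ' ≠ 0)
    (h : ∀ᶠ s in 𝓝 t, g (γ s) = g (γ t)) : g' = 0 := by
  have hcomp : HasDerivAt (g ∘ γ) (γ' • g') t := hg.scomp t hγ
  have hconst : HasDerivAt (g ∘ γ) 0 t :=
    (hasDerivAt_const t (g (γ t))).congr_of_eventuallyEq h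
  exact (smul_eq_zero.mp (hcomp.unique hconst)).resolve_left hγ'

theorem differentiableAt_lightConePoint (c x₁ x₂ : ℂ) {u : ℂ} (hu : u ≠ 0) :
    DifferentiableAt ℂ (lightConePoint c x₁ x₂) u := by
  refine differentiableAt_pi.2 fun i => ?_
  fin_cases i <;> simp [lightConePoint] <;> fun_prop (disch := exact hu)

def EuclideanInvariant (F : (Fin 4 → ℂ) → ℂ) : Prop :=
  ∀ R ∈ specialOrthogonalGroup (Fin 4) ℝ, ∀ z ∈ ForwardTube, euclRotAct R z ∈ ForwardTube →
    F (euclRotAct R z) = F z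

namespace EuclideanInvariant

variable {F : (Fin 4 → ℂ) → ℂ} {z : Fin 4 → ℂ} {c x₁ x₂ : ℂ}

theorem apply_spatialRot12 (hinv : EuclideanInvariant F) (θ : ℝ) (hz : z ∈ ForwardTube) :
    F (spatialRot12 θ z) = F z := by
  rw [← euclRotAct_planeRotation01]
  exact hinv _ (planeRotation01_mem_specialOrthogonalGroup θ) z hz
    (by rw [euclRotAct_planeRotation01]; exact spatialRot12_mem_forwardTube θ hz)

theorem apply_spatialRot23 (hinv : EuclideanInvariant F) (θ : ℝ) (hz : z ∈ ForwardTube) :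
    F (spatialRot23 θ z) = F z := by
  rw [← euclRotAct_planeRotation12]
  exact hinv _ (planeRotation12_mem_specialOrthogonalGroup θ) z hz
    (by rw [euclRotAct_planeRotation12]; exact spatialRot23_mem_forwardTube θ hz)

theorem deriv_comp_lightConePoint (hF : ∀ z ∈ ForwardTube, DifferentiableAt ℂ F z)
    (hinv : EuclideanInvariant F) (hx₁ : x₁.im = 0) (hx₂ : x₂.im = 0) {u : ℂ}
    (hu : u ∈ lightConeDomain c) : deriv (fun u => F (lightConePoint c x₁ x₂ u)) u = 0 := by
  have hu₀ := ne_zero_of_mem_lightConeDomain hu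
  set γ : ℝ → ℂ := fun θ => u * exp (-(θ * I))
  have hγ0 : γ 0 = u := by simp [γ]
  have hγ : HasDerivAt γ (u * -I) 0 := by
    have : HasDerivAt (fun w : ℂ => u * exp (-(w * I))) (u * (exp (-(↑(0 : ℝ) * I)) * -I))
        ↑(0 : ℝ) :=
      (((hasDerivAt_id _).mul_const I).neg.cexp).const_mul u |>.congr_deriv (by simp)
    simpa using this.comp_ofReal
  have hmem : ∀ᶠ θ in 𝓝 0, γ θ ∈ lightConeDomain c :=
    hγ.continuousAt.preimage_mem_nhds (hγ0 ▸ (isOpen_lightConeDomain c).mem_nhds hu)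
  refine HasDerivAt.eq_zero_of_eventually_comp_eq (g := fun u => F (lightConePoint c x₁ x₂ u))
    (t := 0) ?_ hγ (by simp [hu₀]) (hmem.mono fun θ hθ => ?_)
  · rw [hγ0]
    exact ((hF _ (lightConePoint_mem_forwardTube hx₁ hx₂ hu)).comp u
      (differentiableAt_lightConePoint c x₁ x₂ hu₀)).hasDerivAt
  · simp only [hγ0, γ, ← euclRotAct_planeRotation23_lightConePoint]
    refine hinv _ (planeRotation23_mem_specialOrthogonalGroup θ) _
      (lightConePoint_mem_forwardTube hx₁ hx₂ hu) ?_
    rw [euclRotAct_planeRotation23_lightConePoint]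
    exact lightConePoint_mem_forwardTube hx₁ hx₂ hθ

theorem apply_lightConePoint_eq (hF : ∀ z ∈ ForwardTube, DifferentiableAt ℂ F z)
    (hinv : EuclideanInvariant F) (hx₁ : x₁.im = 0) (hx₂ : x₂.im = 0) {u u' : ℂ}
    (hu : u ∈ lightConeDomain c) (hu' : u' ∈ lightConeDomain c) :
    F (lightConePoint c x₁ x₂ u) = F (lightConePoint c x₁ x₂ u') :=
  (isOpen_lightConeDomain c).is_const_of_deriv_eq_zero (convex_lightConeDomain c).isPreconnected
    (fun v hv => ((hF _ (lightConePoint_mem_forwardTube hx₁ hx₂ hv)).comp v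
      (differentiableAt_lightConePoint c x₁ x₂ (ne_zero_of_mem_lightConeDomain hv))
        ).differentiableWithinAt)
    (fun _ hv => hinv.deriv_comp_lightConePoint hF hx₁ hx₂ hv) hu hu'

theorem exists_im_one_two_eq_zero (hinv : EuclideanInvariant F) (hz : z ∈ ForwardTube) :
    ∃ y ∈ ForwardTube, (y 1).im = 0 ∧ (y 2).im = 0 ∧
      minkowskiSq y = minkowskiSq z ∧ F y = F z := by
  obtain ⟨θ, hθ⟩ := exists_cos_mul_sub_sin_mul_eq_zero (z 1).im (z 2).im
  set z' := spatialRot12 θ z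
  have hz' := spatialRot12_mem_forwardTube θ hz
  obtain ⟨φ, hφ⟩ := exists_cos_mul_sub_sin_mul_eq_zero (z' 2).im (z' 3).im
  refine ⟨spatialRot23 φ z', spatialRot23_mem_forwardTube φ hz', ?_, ?_, ?_, ?_⟩
  · simpa [spatialRot23, z', spatialRot12, cos_ofReal_re, sin_ofReal_re] using hθ
  · simpa [spatialRot23, cos_ofReal_re, sin_ofReal_re] using hφ
  · rw [minkowskiSq_spatialRot23, minkowskiSq_spatialRot12]
  · rw [hinv.apply_spatialRot23 φ hz', hinv.apply_spatialRot12 θ hz]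

theorem exists_im_one_two_three_eq_zero (hF : ∀ z ∈ ForwardTube, DifferentiableAt ℂ F z)
    (hinv : EuclideanInvariant F) (hz : z ∈ ForwardTube) (h₁ : (z 1).im = 0)
    (h₂ : (z 2).im = 0) :
    ∃ y ∈ ForwardTube, (y 1).im = 0 ∧ (y 2).im = 0 ∧ (y 3).im = 0 ∧
      minkowskiSq y = minkowskiSq z ∧ F y = F z := by
  have hD := mem_lightConeDomain_of_mem_forwardTube hz h₁ h₂
  have hz_eq := eq_lightConePoint z (ne_zero_of_mem_lightConeDomain hD)
  obtain ⟨u, hu, him⟩ := exists_mem_lightConeDomain_im_eq hD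
  refine ⟨_, lightConePoint_mem_forwardTube h₁ h₂ hu, h₁, h₂, by simp [lightConePoint, him],
    ?_, ?_⟩
  · conv_rhs => rw [hz_eq]
    rw [minkowskiSq_lightConePoint (ne_zero_of_mem_lightConeDomain hu),
      minkowskiSq_lightConePoint (ne_zero_of_mem_lightConeDomain hD)]
  · rw [hinv.apply_lightConePoint_eq hF h₁ h₂ hu hD, ← hz_eq]

theorem exists_one_two_eq_zero_of_im_eq_zero (hinv : EuclideanInvariant F) (hz : z ∈ ForwardTube)
    (h₁ : (z 1).im = 0) (h₂ : (z 2).im = 0) (h₃ : (z 3).im = 0) :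
    ∃ y ∈ ForwardTube, y 1 = 0 ∧ y 2 = 0 ∧ minkowskiSq y = minkowskiSq z ∧ F y = F z := by
  obtain ⟨θ, hθ⟩ := exists_cos_mul_sub_sin_mul_eq_zero (z 1).re (z 2).re
  set z' := spatialRot12 θ z
  have hz' := spatialRot12_mem_forwardTube θ hz
  obtain ⟨φ, hφ⟩ := exists_cos_mul_sub_sin_mul_eq_zero (z' 2).re (z' 3).re
  refine ⟨spatialRot23 φ z', spatialRot23_mem_forwardTube φ hz', ?_, ?_, ?_, ?_⟩
  · refine Complex.ext ?_ ?_
    · simpa [spatialRot23, z', spatialRot12, cos_ofReal_re, sin_ofReal_re] using hθ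
    · simp [spatialRot23, z', spatialRot12, cos_ofReal_re, sin_ofReal_re, h₁, h₂]
  · refine Complex.ext ?_ ?_
    · simpa [spatialRot23, cos_ofReal_re, sin_ofReal_re] using hφ
    · simp [spatialRot23, z', spatialRot12, cos_ofReal_re, sin_ofReal_re, h₁, h₂, h₃]
  · rw [minkowskiSq_spatialRot23, minkowskiSq_spatialRot12]
  · rw [hinv.apply_spatialRot23 φ hz', hinv.apply_spatialRot12 θ hz]

theorem exists_one_two_eq_zero (hF : ∀ z ∈ ForwardTube, DifferentiableAt ℂ F z)
    (hinv : EuclideanInvariant F) (hz : z ∈ ForwardTube) :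
    ∃ y ∈ ForwardTube, y 1 = 0 ∧ y 2 = 0 ∧ minkowskiSq y = minkowskiSq z ∧ F y = F z := by
  obtain ⟨y₁, hy₁, h₁, h₂, hq₁, hF₁⟩ := hinv.exists_im_one_two_eq_zero hz
  obtain ⟨y₂, hy₂, h₁', h₂', h₃', hq₂, hF₂⟩ :=
    hinv.exists_im_one_two_three_eq_zero hF hy₁ h₁ h₂
  obtain ⟨y, hy, e₁, e₂, hq, hFy⟩ := hinv.exists_one_two_eq_zero_of_im_eq_zero hy₂ h₁' h₂' h₃'
  exact ⟨y, hy, e₁, e₂, hq.trans (hq₂.trans hq₁), hFy.trans (hF₂.trans hF₁)⟩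

theorem apply_eq_of_minkowskiSq_eq (hF : ∀ z ∈ ForwardTube, DifferentiableAt ℂ F z)
    (hinv : EuclideanInvariant F) {z z' : Fin 4 → ℂ} (hz : z ∈ ForwardTube)
    (hz' : z' ∈ ForwardTube) (h : minkowskiSq z = minkowskiSq z') : F z = F z' := by
  obtain ⟨y, hy, hy₁, hy₂, hq, hFy⟩ := hinv.exists_one_two_eq_zero hF hz
  obtain ⟨y', hy', hy₁', hy₂', hq', hFy'⟩ := hinv.exists_one_two_eq_zero hF hz'
  obtain ⟨hu, hy_eq⟩ := mem_lightConeDomain_minkowskiSq_and_eq hy hy₁ hy₂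
  obtain ⟨hu', hy_eq'⟩ := mem_lightConeDomain_minkowskiSq_and_eq hy' hy₁' hy₂'
  have hc : minkowskiSq y' = minkowskiSq y := by rw [hq, hq', h]
  rw [hc] at hu' hy_eq'
  calc F z = F y := hFy.symm
    _ = F y' := by
      rw [hy_eq, hy_eq', hinv.apply_lightConePoint_eq hF zero_im zero_im hu hu']
    _ = F z' := hFy'

end EuclideanInvariant

/-- Theorem 10 of the paper, a Bargmann–Hall–Wightman-type theorem: a
function holomorphic on the forward tube and invariant under all Euclidean rotations
`SO(4)` (wherever the rotated point stays in the tube) is invariant under the proper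
complex Lorentz group `L₊(ℂ)` (wherever the transformed point stays in the tube). -/
theorem euclidean_invariance_implies_complex_lorentz_invariance
    (F : (Fin 4 → ℂ) → ℂ) (hF : ∀ z ∈ ForwardTube, DifferentiableAt ℂ F z)
    (hinv : ∀ R : Matrix (Fin 4) (Fin 4) ℝ, Rᵀ * R = 1 → R.det = 1 →
      ∀ z ∈ ForwardTube, euclRotAct R z ∈ ForwardTube → F (euclRotAct R z) = F z) :
    ∀ Λ : Matrix (Fin 4) (Fin 4) ℂ, Λᵀ * minkGC * Λ = minkGC → Λ.det = 1 →
      ∀ z ∈ ForwardTube, (fun i => ∑ j, Λ i j * z j) ∈ ForwardTube →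
        F (fun i => ∑ j, Λ i j * z j) = F z := by
  intro Λ hΛ _ z hz hΛz
  have hinv' : EuclideanInvariant F := fun R hR => by
    rw [mem_specialOrthogonalGroup_iff, mem_orthogonalGroup_iff'] at hR
    exact hinv R hR.1 hR.2
  exact hinv'.apply_eq_of_minkowskiSq_eq hF hΛz hz (minkowskiSq_mulVec hΛ z)
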